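/- Let h > 0 and let u solve BVP(h). Then for all y ∈ [0,1]: (i) 0 < u(0) ≤ u(y) ≤ u(1) < c_*; (ii) 0 ≤ u'(y) ≤ u'(1) and u'(1) = (κ_L/(L·κ))·h·(c_* − u(1)); (iii) 0 ≤ u''(y) ≤ r(c_*)·h²/κ. -/

import Mathlib

open Set MeasureTheory intervalIntegral Filter

/-- `u` (with derivative `u'` and second derivative `u''`) solves the boundary value
problem BVP(h): `(κ/h²)·u'' = r(u)` on `[0,1]`, `u'(0) = 0`,
`u(1) + (L·κ/(κ_L·h))·u'(1) = c_*`. -/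
def SolvesBVP (κ κL L cstar : ℝ) (r : ℝ → ℝ) (h : ℝ)
    (u u' u'' : ℝ → ℝ) : Prop :=
  (∀ y ∈ Icc (0:ℝ) 1, HasDerivWithinAt u (u' y) (Icc (0:ℝ) 1) y) ∧
  (∀ y ∈ Icc (0:ℝ) 1, HasDerivWithinAt u' (u'' y) (Icc (0:ℝ) 1) y) ∧
  ContinuousOn u'' (Icc (0:ℝ) 1) ∧
  (∀ y ∈ Icc (0:ℝ) 1, (κ / h ^ 2) * u'' y = r (u y)) ∧
  u' 0 = 0 ∧
  u 1 + (L * κ / (κL * h)) * u' 1 = cstar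

/-!
Write `c = h²/κ`, so that `u'' = c·r(u)`. Since `s·r(s) ≥ 0`, the function `u·u'` has
derivative `u'² + c·u·r(u) ≥ 0` and vanishes at `0`; hence `u·u' ≥ 0` and `u²` is nondecreasing.
If `u(0) = 0`, uniqueness for the locally Lipschitz system `(u, u')' = (u', c·r(u))` forces
`u ≡ 0`, contradicting the Robin condition. So `u(0) ≠ 0`, and by monotonicity of `u²` the
function `u` never vanishes. Multiplying the Robin condition by `u(1)` gives
`c_*·u(1) = u(1)² + k·u(1)u'(1) ≥ 0` with `k = Lκ/(κ_L h) > 0`, so `u(1) > 0` and hence `u > 0`.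
Then `u'' > 0`, and the bounds follow from monotonicity of `u'`, `u` and `r`.
-/

lemma monotoneOn_Icc_of_hasDerivWithinAt_nonneg {f f' : ℝ → ℝ} {a b : ℝ}
    (hf : ∀ x ∈ Icc a b, HasDerivWithinAt f (f' x) (Icc a b) x)
    (hf' : ∀ x ∈ Ioo a b, 0 ≤ f' x) : MonotoneOn f (Icc a b) :=
  monotoneOn_of_hasDerivWithinAt_nonneg (convex_Icc a b)
    (fun x hx => (hf x hx).continuousWithinAt)
    (fun x hx => (hf x (interior_subset hx)).mono interior_subset) (by rwa [interior_Icc])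

lemma strictMonoOn_Icc_of_hasDerivWithinAt_pos {f f' : ℝ → ℝ} {a b : ℝ}
    (hf : ∀ x ∈ Icc a b, HasDerivWithinAt f (f' x) (Icc a b) x)
    (hf' : ∀ x ∈ Ioo a b, 0 < f' x) : StrictMonoOn f (Icc a b) :=
  strictMonoOn_of_hasDerivWithinAt_pos (convex_Icc a b)
    (fun x hx => (hf x hx).continuousWithinAt)
    (fun x hx => (hf x (interior_subset hx)).mono interior_subset) (by rwa [interior_Icc])

section SecondOrder

variable {u u' u'' : ℝ → ℝ} {a b : ℝ}

lemma monotoneOn_mul_deriv_of_mul_secondDeriv_nonneg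
    (hu : ∀ y ∈ Icc a b, HasDerivWithinAt u (u' y) (Icc a b) y)
    (hu' : ∀ y ∈ Icc a b, HasDerivWithinAt u' (u'' y) (Icc a b) y)
    (h : ∀ y ∈ Icc a b, 0 ≤ u y * u'' y) :
    MonotoneOn (fun y => u y * u' y) (Icc a b) :=
  monotoneOn_Icc_of_hasDerivWithinAt_nonneg (fun y hy => (hu y hy).mul (hu' y hy))
    fun y hy => by nlinarith [h y (Ioo_subset_Icc_self hy), mul_self_nonneg (u' y)]

lemma monotoneOn_sq_of_mul_deriv_nonneg
    (hu : ∀ y ∈ Icc a b, HasDerivWithinAt u (u' y) (Icc a b) y)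
    (h : ∀ y ∈ Icc a b, 0 ≤ u y * u' y) :
    MonotoneOn (fun y => u y ^ 2) (Icc a b) :=
  monotoneOn_Icc_of_hasDerivWithinAt_nonneg (fun y hy => (hu y hy).pow 2)
    fun y hy => by simpa [mul_assoc] using mul_nonneg zero_le_two (h y (Ioo_subset_Icc_self hy))

lemma secondOrderODE_eqOn_zero {ρ : ℝ → ℝ} (hρ : LocallyLipschitz ρ) (hρ0 : ρ 0 = 0)
    (hu : ∀ y ∈ Icc a b, HasDerivWithinAt u (u' y) (Icc a b) y)
    (hu' : ∀ y ∈ Icc a b, HasDerivWithinAt u' (ρ (u y)) (Icc a b) y)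
    (ha : u a = 0) (ha' : u' a = 0) :
    EqOn (fun y => (u y, u' y)) 0 (Icc a b) := by
  set F : ℝ × ℝ → ℝ × ℝ := fun p => (p.2, ρ p.1)
  set γ : ℝ → ℝ × ℝ := fun y => (u y, u' y)
  have hγ : ∀ y ∈ Icc a b, HasDerivWithinAt γ (F (γ y)) (Icc a b) y := fun y hy =>
    (hu y hy).prodMk (hu' y hy)
  have hγc : ContinuousOn γ (Icc a b) := fun y hy => (hγ y hy).continuousWithinAt
  set s := γ '' Icc a b ∪ {0}
  have hs : IsCompact s := (isCompact_Icc.image_of_continuousOn hγc).union isCompact_singleton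
  have hF : LocallyLipschitz F :=
    LipschitzWith.prod_snd.locallyLipschitz.prodMk (hρ.comp LipschitzWith.prod_fst.locallyLipschitz)
  obtain ⟨K, hK⟩ := hF.locallyLipschitzOn.exists_lipschitzOnWith_of_compact hs
  refine ODE_solution_unique_of_mem_Icc_right (v := fun _ => F) (s := fun _ => s)
    (fun _ _ => hK) hγc (fun y hy => ?_) (fun y hy => Or.inl ⟨y, Ico_subset_Icc_self hy, rfl⟩)
    continuousOn_const (fun y _ => ?_) (fun _ _ => Or.inr rfl) (by simp [γ, ha, ha'])
  · exact (hγ y (Ico_subset_Icc_self hy)).mono_of_mem_nhdsWithin (Icc_mem_nhdsGE_of_mem hy)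
  · exact (hasDerivWithinAt_const y (Ici y) (0 : ℝ × ℝ)).congr_deriv (Prod.ext rfl hρ0.symm)

end SecondOrder

lemma apply_zero_eq_zero_of_mul_apply_pos {r : ℝ → ℝ} (hr : ContinuousAt r 0)
    (hsign : ∀ s : ℝ, s ≠ 0 → s * r s > 0) : r 0 = 0 :=
  le_antisymm
    (le_of_tendsto (hr.tendsto.mono_left (nhdsWithin_le_nhds (s := Iio 0)))
      (eventually_nhdsWithin_of_forall fun s hs => (neg_of_mul_pos_right (hsign s hs.ne) hs.le).le))
    (ge_of_tendsto (hr.tendsto.mono_left (nhdsWithin_le_nhds (s := Ioi 0)))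
      (eventually_nhdsWithin_of_forall fun s hs => (pos_of_mul_pos_right (hsign s hs.ne') hs.le).le))

namespace SolvesBVP

variable {κ κL L cstar : ℝ} {r : ℝ → ℝ} {h : ℝ} {u u' u'' : ℝ → ℝ}

lemma secondDeriv_eq (hu : SolvesBVP κ κL L cstar r h u u' u'') (hκ : κ ≠ 0) (hh : h ≠ 0) :
    ∀ y ∈ Icc (0:ℝ) 1, u'' y = h ^ 2 / κ * r (u y) := fun y hy => by
  rw [← hu.2.2.2.1 y hy]
  field_simp

lemma mul_deriv_nonneg (hu : SolvesBVP κ κL L cstar r h u u' u'') (hκ : 0 < κ) (hh : h ≠ 0)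
    (hrsign : ∀ s : ℝ, s ≠ 0 → s * r s > 0) :
    ∀ y ∈ Icc (0:ℝ) 1, 0 ≤ u y * u' y := by
  have hsr (s : ℝ) : 0 ≤ s * r s := by
    rcases eq_or_ne s 0 with rfl | hs
    · rw [zero_mul]
    · exact (hrsign s hs).le
  have hmono := monotoneOn_mul_deriv_of_mul_secondDeriv_nonneg hu.1 hu.2.1 fun y hy => by
    rw [hu.secondDeriv_eq hκ.ne' hh y hy, mul_left_comm]
    exact mul_nonneg (by positivity) (hsr _)
  intro y hy
  simpa [hu.2.2.2.2.1] using hmono (left_mem_Icc.2 zero_le_one) hy hy.1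

lemma apply_zero_ne_zero (hu : SolvesBVP κ κL L cstar r h u u' u'') (hκ : κ ≠ 0) (hh : h ≠ 0)
    (hc : 0 < cstar) (hr : ContDiff ℝ 1 r) (hrsign : ∀ s : ℝ, s ≠ 0 → s * r s > 0) :
    u 0 ≠ 0 := by
  intro hu0
  have hρ0 : h ^ 2 / κ * r 0 = 0 := by
    rw [apply_zero_eq_zero_of_mul_apply_pos hr.continuous.continuousAt hrsign, mul_zero]
  have hzero := secondOrderODE_eqOn_zero (contDiff_const.mul hr).locallyLipschitz hρ0 hu.1
    (fun y hy => (hu.2.1 y hy).congr_deriv (hu.secondDeriv_eq hκ hh y hy)) hu0 hu.2.2.2.2.1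
    (right_mem_Icc.2 zero_le_one)
  have hbc := hu.2.2.2.2.2
  simp only [Pi.zero_apply, Prod.mk_eq_zero] at hzero
  rw [hzero.1, hzero.2, mul_zero, add_zero] at hbc
  exact hc.ne hbc

lemma pos (hu : SolvesBVP κ κL L cstar r h u u' u'') (hκ : 0 < κ) (hκL : 0 < κL) (hL : 0 < L)
    (hc : 0 < cstar) (hr : ContDiff ℝ 1 r) (hrsign : ∀ s : ℝ, s ≠ 0 → s * r s > 0)
    (hh : 0 < h) : ∀ y ∈ Icc (0:ℝ) 1, 0 < u y := by
  have h0 : (0:ℝ) ∈ Icc (0:ℝ) 1 := left_mem_Icc.2 zero_le_one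
  have h1 : (1:ℝ) ∈ Icc (0:ℝ) 1 := right_mem_Icc.2 zero_le_one
  have hprod := hu.mul_deriv_nonneg hκ hh.ne' hrsign
  have hsq := monotoneOn_sq_of_mul_deriv_nonneg hu.1 hprod
  have hu0 := hu.apply_zero_ne_zero hκ.ne' hh.ne' hc hr hrsign
  have hne : ∀ y ∈ Icc (0:ℝ) 1, u y ≠ 0 := fun y hy huy => by
    have : u 0 ^ 2 ≤ 0 := by simpa [huy] using hsq h0 hy hy.1
    exact hu0 (pow_eq_zero_iff two_ne_zero |>.1 (le_antisymm this (sq_nonneg _)))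
  -- the Robin condition multiplied by `u 1`
  have hu1 : 0 < u 1 := by
    have hk : 0 < L * κ / (κL * h) := by positivity
    have : 0 ≤ cstar * u 1 := by
      rw [← hu.2.2.2.2.2]
      nlinarith [hprod 1 h1, sq_nonneg (u 1)]
    exact lt_of_le_of_ne ((mul_nonneg_iff_of_pos_left hc).1 this) (hne 1 h1).symm
  intro y hy
  by_contra! huy
  obtain ⟨z, hz, huz⟩ := isPreconnected_Icc.intermediate_value hy h1
    (fun x hx => (hu.1 x hx).continuousWithinAt) ⟨huy, hu1.le⟩
  exact hne z hz huz

end SolvesBVP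

theorem monotonicity_bounds_BVP
    (κ κL L cstar : ℝ) (hκ : 0 < κ) (hκL : 0 < κL) (hL : 0 < L) (hc : 0 < cstar)
    (r : ℝ → ℝ) (hr : ContDiff ℝ 1 r) (hrsign : ∀ s : ℝ, s ≠ 0 → s * r s > 0)
    (hr' : ∀ s : ℝ, 0 ≤ deriv r s)
    (h : ℝ) (hh : 0 < h) (u u' u'' : ℝ → ℝ)
    (hu : SolvesBVP κ κL L cstar r h u u' u'') :
    ∀ y ∈ Icc (0:ℝ) 1,
      (0 < u 0 ∧ u 0 ≤ u y ∧ u y ≤ u 1 ∧ u 1 < cstar) ∧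
      (0 ≤ u' y ∧ u' y ≤ u' 1 ∧ u' 1 = (κL / (L * κ)) * h * (cstar - u 1)) ∧
      (0 ≤ u'' y ∧ u'' y ≤ r cstar * h ^ 2 / κ) := by
  have h0 : (0:ℝ) ∈ Icc (0:ℝ) 1 := left_mem_Icc.2 zero_le_one
  have h1 : (1:ℝ) ∈ Icc (0:ℝ) 1 := right_mem_Icc.2 zero_le_one
  have hpos := hu.pos hκ hκL hL hc hr hrsign hh
  have hu'' := hu.secondDeriv_eq hκ.ne' hh.ne'
  obtain ⟨hu₁, hu₂, -, -, hbc0, hbc1⟩ := hu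
  have hrmono : Monotone r := monotone_of_deriv_nonneg (hr.differentiable one_ne_zero) hr'
  have hu''pos : ∀ y ∈ Icc (0:ℝ) 1, 0 < u'' y := fun y hy => by
    rw [hu'' y hy]
    exact mul_pos (by positivity) (pos_of_mul_pos_right (hrsign _ (hpos y hy).ne') (hpos y hy).le)
  have hu'mono := strictMonoOn_Icc_of_hasDerivWithinAt_pos hu₂ fun y hy =>
    hu''pos y (Ioo_subset_Icc_self hy)
  have hu'nonneg : ∀ y ∈ Icc (0:ℝ) 1, 0 ≤ u' y := fun y hy =>
    hbc0 ▸ hu'mono.monotoneOn h0 hy hy.1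
  have humono := monotoneOn_Icc_of_hasDerivWithinAt_nonneg hu₁ fun y hy =>
    hu'nonneg y (Ioo_subset_Icc_self hy)
  have hu1 : u 1 < cstar := by
    have : 0 < L * κ / (κL * h) * u' 1 := mul_pos (by positivity) (hbc0 ▸ hu'mono h0 h1 one_pos)
    linarith
  intro y hy
  refine ⟨⟨hpos 0 h0, humono h0 hy hy.1, humono hy h1 hy.2, hu1⟩,
    ⟨hu'nonneg y hy, hu'mono.monotoneOn hy h1 hy.2, ?_⟩, ⟨(hu''pos y hy).le, ?_⟩⟩
  · field_simp at hbc1 ⊢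
    linarith
  · rw [hu'' y hy, mul_comm, mul_div_assoc]
    exact mul_le_mul_of_nonneg_right (hrmono (by linarith [humono hy h1 hy.2])) (by positivity)
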